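/- Let P be a set of n ≥ 4 points in convex position in the plane, n even. Then any family of pairwise edge-disjoint plane perfect matchings on P that are additionally pairwise non-crossing (no edge of one crosses an edge of another) has size at most 2. -/

import Mathlib

noncomputable section

/-- Points of the Euclidean plane. -/
abbrev Pt : Type := EuclideanSpace ℝ (Fin 2)

/-- Two straight segments *cross* if they share a point interior to both. -/
def SegCross (a b c d : Pt) : Prop :=
  (openSegment ℝ a b ∩ openSegment ℝ c d).Nonempty

/-- Two edges (unordered pairs of points) cross. -/
def EdgesCross (e f : Sym2 Pt) : Prop :=
  ∃ a b c d : Pt, e = s(a, b) ∧ f = s(c, d) ∧ SegCross a b c d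

/-- `M` is a perfect matching on the point set `P`: a set of non-degenerate edges with
endpoints in `P` such that every point of `P` lies in exactly one edge. -/
def IsPerfMatch (P : Set Pt) (M : Set (Sym2 Pt)) : Prop :=
  (∀ e ∈ M, ¬ e.IsDiag ∧ ∀ x ∈ e, x ∈ P) ∧ ∀ x ∈ P, ∃! e, e ∈ M ∧ x ∈ e

/-- A plane (non-crossing) perfect matching on `P`. -/
def IsPlaneMatch (P : Set Pt) (M : Set (Sym2 Pt)) : Prop :=
  IsPerfMatch P M ∧ M.Pairwise fun e f => ¬ EdgesCross e f

/-- `P` is in convex position: every point of `P` is a vertex of the convex hull. -/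
def ConvexPosition (P : Set Pt) : Prop :=
  ∀ x ∈ P, x ∉ convexHull ℝ (P \ {x})

/-- No three points of `P` are collinear. -/
def NoThreeCollinear (P : Set Pt) : Prop :=
  ∀ x ∈ P, ∀ y ∈ P, ∀ z ∈ P, x ≠ y → x ≠ z → y ≠ z →
    ¬ Collinear ℝ ({x, y, z} : Set Pt)

/-- `e` is an edge of the convex hull of `P`: its endpoints are distinct points of `P` and
the segment joining them lies on the boundary of the convex hull of `P`. -/
def IsHullEdge (P : Set Pt) (e : Sym2 Pt) : Prop :=
  ∃ a b : Pt, e = s(a, b) ∧ a ∈ P ∧ b ∈ P ∧ a ≠ b ∧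
    segment ℝ a b ⊆ frontier (convexHull ℝ P)

/-!
The union `G` of three of the matchings is a non-crossing geometric graph on `P` in which every
vertex has three distinct neighbours. Choose an edge `ab` of `G` and a side of its line such that
the number of points of `P` strictly on that side is positive and minimal, and let `c` be one of
these points. An edge `cd` of `G` cannot cross `ab`, so every point of `P` that the line `cd`
separates from `ab` lies on the chosen side of `ab`; as `c` is not such a point, minimality
leaves none at all. Thus each of the three lines through `c` and a neighbour leaves all of `P`
on one side, which is impossible for three distinct neighbours.
-/

def orient (a b c : Pt) : ℝ := (b 0 - a 0) * (c 1 - a 1) - (b 1 - a 1) * (c 0 - a 0)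

lemma orient_swap (a b c : Pt) : orient b a c = -orient a b c := by unfold orient; ring

lemma orient_comm_right (a b c : Pt) : orient a c b = -orient a b c := by unfold orient; ring

@[simp] lemma orient_self_left (a c : Pt) : orient a a c = 0 := by unfold orient; ring

@[simp] lemma orient_eq_zero_left (a b : Pt) : orient a b a = 0 := by unfold orient; ring

@[simp] lemma orient_eq_zero_right (a b : Pt) : orient a b b = 0 := by unfold orient; ring

lemma orient_add_smul {u v : ℝ} (h : u + v = 1) (a b p q : Pt) :
    orient a b (u • p + v • q) = u * orient a b p + v * orient a b q := by
  obtain rfl : v = 1 - u := by linarith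
  simp only [orient, PiLp.add_apply, PiLp.smul_apply, smul_eq_mul]
  ring

lemma mem_affineSpan_pair_of_orient_eq_zero {a b p : Pt} (hab : a ≠ b) (h : orient a b p = 0) :
    p ∈ line[ℝ, a, b] := by
  have key : ∀ s : ℝ, p 0 = (1 - s) * a 0 + s * b 0 → p 1 = (1 - s) * a 1 + s * b 1 →
      p ∈ line[ℝ, a, b] := by
    intro s h0 h1
    convert AffineMap.lineMap_mem_affineSpan_pair s a b
    rw [AffineMap.lineMap_apply_module]
    ext i
    fin_cases i <;> simp [h0, h1]
  unfold orient at h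
  by_cases h0 : b 0 - a 0 = 0
  · have h1 : b 1 - a 1 ≠ 0 := fun h1 ↦ hab <| by
      ext i; fin_cases i <;> simp <;> linarith
    refine key ((p 1 - a 1) / (b 1 - a 1)) ?_ (by field_simp; ring)
    field_simp
    nlinarith
  · exact key ((p 0 - a 0) / (b 0 - a 0)) (by field_simp; ring) (by field_simp; nlinarith)

lemma exists_mem_openSegment_orient_eq_zero {a b c d : Pt} (hc : 0 < orient a b c)
    (hd : orient a b d < 0) : ∃ p ∈ openSegment ℝ c d, orient a b p = 0 := by
  set A := orient a b c
  set B := orient a b d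
  have hAB : 0 < A - B := by linarith
  refine ⟨(1 - A / (A - B)) • c + (A / (A - B)) • d,
    ⟨1 - A / (A - B), A / (A - B), ?_, by positivity, by ring, rfl⟩, ?_⟩
  · rw [sub_pos, div_lt_one hAB]; linarith
  · rw [orient_add_smul (by ring)]
    field_simp
    ring

lemma orient_sign_cycle (c p q r : Pt) (hp : 0 < orient c p q * orient c p r)
    (hq : 0 < orient c q r * orient c q p) : orient c r p * orient c r q ≤ 0 := by
  rw [orient_comm_right c r p] at hp
  rw [orient_comm_right c p q] at hq
  rw [orient_comm_right c q r]
  by_contra! hr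
  nlinarith [mul_pos (mul_pos hp hq) hr, sq_nonneg (orient c p q * orient c q r * orient c r p)]

section

variable {P : Set Pt}

namespace ConvexPosition

theorem mem_extremePoints (hconv : ConvexPosition P) {x : Pt} (hx : x ∈ P) :
    x ∈ (convexHull ℝ P).extremePoints ℝ := by
  refine _root_.mem_extremePoints.2 ⟨subset_convexHull ℝ P hx, ?_⟩
  rcases (P \ {x}).eq_empty_or_nonempty with hP | hP
  · obtain rfl : P = {x} := (Set.sdiff_eq_empty.1 hP).antisymm (by simpa)
    simp +contextual
  have hull_eq : convexHull ℝ P = convexJoin ℝ {x} (convexHull ℝ (P \ {x})) := by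
    rw [← convexHull_insert hP, Set.insert_sdiff_singleton, Set.insert_eq_of_mem hx]
  rw [hull_eq, convexJoin_singleton_left]
  intro y hy z hz hyz
  obtain ⟨c₁, hc₁, s₁, t₁, hs₁, ht₁, hst₁, rfl⟩ := Set.mem_iUnion₂.1 hy
  obtain ⟨c₂, hc₂, s₂, t₂, hs₂, ht₂, hst₂, rfl⟩ := Set.mem_iUnion₂.1 hz
  obtain ⟨α, β, hα, hβ, hαβ, hcomb⟩ := hyz
  set l := α * t₁ + β * t₂
  rcases (by positivity : 0 ≤ l).eq_or_lt with hl | hl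
  · have h₁ : t₁ = 0 := by nlinarith [mul_nonneg hβ.le ht₂]
    have h₂ : t₂ = 0 := by nlinarith [mul_nonneg hα.le ht₁]
    obtain rfl : s₁ = 1 := by linarith
    obtain rfl : s₂ = 1 := by linarith
    simp [h₁, h₂]
  refine (hconv x hx <| (convex_convexHull ℝ _).segment_subset hc₁ hc₂ ⟨α * t₁ / l, β * t₂ / l,
    by positivity, by positivity, by rw [← add_div, div_self hl.ne'], ?_⟩).elim
  have hs : α * s₁ + β * s₂ = 1 - l := by
    simp only [l]; linear_combination α * hst₁ + β * hst₂ + hαβ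
  have hx' : (α * t₁) • c₁ + (β * t₂) • c₂ = l • x := by
    linear_combination (norm := module) hcomb - hs • x
  rw [div_eq_inv_mul, div_eq_inv_mul, mul_smul l⁻¹ (α * t₁), mul_smul l⁻¹ (β * t₂), ← smul_add,
    hx', inv_smul_smul₀ hl.ne']

theorem eq_or_eq_of_mem_segment (hconv : ConvexPosition P) {x y z : Pt} (hx : x ∈ P)
    (hy : y ∈ convexHull ℝ P) (hz : z ∈ convexHull ℝ P) (h : x ∈ segment ℝ y z) :
    y = x ∨ z = x :=
  (mem_extremePoints_iff_forall_segment.1 (hconv.mem_extremePoints hx)).2 y hy z hz h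

theorem mem_segment_of_orient_eq_zero (hconv : ConvexPosition P) {a b p : Pt} (ha : a ∈ P)
    (hb : b ∈ P) (hab : a ≠ b) (hp : p ∈ convexHull ℝ P) (h : orient a b p = 0) :
    p ∈ segment ℝ a b := by
  have hcol : Collinear ℝ {p, a, b} :=
    collinear_insert_of_mem_affineSpan_pair (mem_affineSpan_pair_of_orient_eq_zero hab h)
  have ha' := subset_convexHull ℝ P ha
  have hb' := subset_convexHull ℝ P hb
  rcases hcol.wbtw_or_wbtw_or_wbtw with hpab | habp | hbpa
  · rcases hconv.eq_or_eq_of_mem_segment ha hp hb' hpab.mem_segment with rfl | rfl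
    exacts [left_mem_segment ℝ _ _, absurd rfl hab]
  · rcases hconv.eq_or_eq_of_mem_segment hb ha' hp habp.mem_segment with rfl | rfl
    exacts [absurd rfl hab, right_mem_segment ℝ _ _]
  · exact segment_symm ℝ b a ▸ hbpa.mem_segment

theorem orient_ne_zero (hconv : ConvexPosition P) {x y z : Pt} (hx : x ∈ P) (hy : y ∈ P)
    (hz : z ∈ P) (hxy : x ≠ y) (hxz : x ≠ z) (hyz : y ≠ z) : orient x y z ≠ 0 := fun h ↦ by
  rcases hconv.eq_or_eq_of_mem_segment hz (subset_convexHull ℝ P hx) (subset_convexHull ℝ P hy)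
    (hconv.mem_segment_of_orient_eq_zero hx hy hxy (subset_convexHull ℝ P hz) h) with h | h
  exacts [hxz h, hyz h]

theorem segCross_of_orient (hconv : ConvexPosition P) {a b c d : Pt} (ha : a ∈ P) (hb : b ∈ P)
    (hc : c ∈ P) (hd : d ∈ P) (hac : 0 < orient a b c) (had : orient a b d < 0) :
    SegCross a b c d := by
  obtain ⟨p, hpcd, hp⟩ := exists_mem_openSegment_orient_eq_zero hac had
  have hab : a ≠ b := by rintro rfl; simp at hac
  have hp_mem : p ∈ segment ℝ c d := openSegment_subset_segment ℝ c d hpcd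
  have hne : ∀ q ∈ P, orient a b q = 0 → q ≠ p := by
    rintro q hq hq0 rfl
    rcases hconv.eq_or_eq_of_mem_segment hq (subset_convexHull ℝ P hc)
      (subset_convexHull ℝ P hd) hp_mem with rfl | rfl <;> linarith
  have hp_ab := hconv.mem_segment_of_orient_eq_zero ha hb hab
    (segment_subset_convexHull hc hd hp_mem) hp
  exact ⟨p, mem_openSegment_of_ne_left_right (hne a ha (by simp)) (hne b hb (by simp)) hp_ab, hpcd⟩

theorem orient_pos_of_separated (hconv : ConvexPosition P) {a b p q x z : Pt} (hp : p ∈ P)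
    (hq : q ∈ P) (hx : x ∈ P) (hz : z ∈ P) (hap : 0 < orient a b p) (haq : 0 ≤ orient a b q)
    (haz : orient a b z ≤ 0) (hsep : orient p q x * orient p q z < 0) : 0 < orient a b x := by
  by_contra! hax
  have hpq : p ≠ q := by rintro rfl; simp at hsep
  obtain ⟨r, hr, hr0⟩ : ∃ r ∈ openSegment ℝ z x, orient p q r = 0 := by
    rcases mul_neg_iff.1 hsep with ⟨h₁, h₂⟩ | ⟨h₁, h₂⟩
    · rw [openSegment_symm]; exact exists_mem_openSegment_orient_eq_zero h₁ h₂
    · exact exists_mem_openSegment_orient_eq_zero h₂ h₁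
  have hr_seg := openSegment_subset_segment ℝ z x hr
  obtain ⟨u, v, hu, hv, huv, rfl⟩ := hconv.mem_segment_of_orient_eq_zero hp hq hpq
    (segment_subset_convexHull hz hx hr_seg) hr0
  have hu : 0 < u := by
    refine hu.lt_of_ne ?_
    rintro rfl
    obtain rfl : v = 1 := by linarith
    rw [zero_smul, zero_add, one_smul] at hr_seg
    rcases hconv.eq_or_eq_of_mem_segment hq (subset_convexHull ℝ P hz)
      (subset_convexHull ℝ P hx) hr_seg with rfl | rfl <;> simp at hsep
  obtain ⟨α, β, hα, hβ, hαβ, hr'⟩ := hr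
  have h_pos := orient_add_smul huv a b p q
  rw [← hr', orient_add_smul hαβ] at h_pos
  nlinarith [mul_nonpos_of_nonneg_of_nonpos hα.le haz, mul_nonpos_of_nonneg_of_nonpos hβ.le hax]

end ConvexPosition

def posSide (P : Set Pt) (a b : Pt) : Set Pt := {x ∈ P | 0 < orient a b x}

def LineSupports (P : Set Pt) (c d : Pt) : Prop :=
  ∀ x ∈ P \ {c, d}, ∀ y ∈ P \ {c, d}, 0 < orient c d x * orient c d y

lemma exists_posSide_eq (c d : Pt) {w : ℝ} (hw : w ≠ 0) :
    ∃ p q, s(p, q) = s(c, d) ∧ posSide P p q = {x ∈ P | 0 < orient c d x * w} := by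
  rcases hw.lt_or_gt with hw | hw
  · refine ⟨d, c, Sym2.eq_swap, Set.sep_ext_iff.2 fun x _ ↦ ?_⟩
    rw [orient_swap, ← neg_mul_neg, mul_pos_iff_of_pos_right (neg_pos.2 hw)]
  · exact ⟨c, d, rfl, Set.sep_ext_iff.2 fun x _ ↦ (mul_pos_iff_of_pos_right hw).symm⟩

lemma ConvexPosition.lineSupports_of_forall_mul_nonneg (hconv : ConvexPosition P) {c d z : Pt}
    (hc : c ∈ P) (hd : d ∈ P) (hz : z ∈ P) (hcd : c ≠ d) (hzc : z ≠ c) (hzd : z ≠ d)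
    (h : ∀ x ∈ P, 0 ≤ orient c d x * orient c d z) : LineSupports P c d := by
  have hz0 := hconv.orient_ne_zero hc hd hz hcd hzc.symm hzd.symm
  have pos : ∀ x ∈ P \ {c, d}, 0 < orient c d x * orient c d z := by
    rintro x ⟨hx, hxcd⟩
    simp only [Set.mem_insert_iff, Set.mem_singleton_iff, not_or] at hxcd
    exact (h x hx).lt_of_ne
      (mul_ne_zero (hconv.orient_ne_zero hc hd hx hcd (Ne.symm hxcd.1) (Ne.symm hxcd.2)) hz0).symm
  intro x hx y hy
  have := mul_pos (pos x hx) (pos y hy)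
  exact pos_of_mul_pos_left (a := orient c d x * orient c d y) (b := orient c d z ^ 2)
    (by linarith) (sq_nonneg _)

lemma not_lineSupports_three {c p q r : Pt} (hp : p ∈ P \ {c}) (hq : q ∈ P \ {c})
    (hr : r ∈ P \ {c}) (hpq : p ≠ q) (hpr : p ≠ r) (hqr : q ≠ r) (hcp : LineSupports P c p)
    (hcq : LineSupports P c q) (hcr : LineSupports P c r) : False := by
  have mem : ∀ {x y}, x ∈ P \ {c} → x ≠ y → x ∈ P \ {c, y} := fun ⟨hx, hxc⟩ hxy ↦
    ⟨hx, by simp_all⟩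
  exact (orient_sign_cycle c p q r (hcp q (mem hq hpq.symm) r (mem hr hpr.symm))
    (hcq r (mem hr hqr.symm) p (mem hp hpq))).not_gt (hcr p (mem hp hpr) q (mem hq hqr))

section NoncrossingGraph

variable {G : Set (Sym2 Pt)}

lemma lineSupports_of_mem_posSide_of_minimal (hfin : P.Finite) (hconv : ConvexPosition P)
    (hG : ∀ e ∈ G, ¬ e.IsDiag ∧ ∀ x ∈ e, x ∈ P)
    (hnc : G.Pairwise fun e f ↦ ¬ EdgesCross e f) {a b c d : Pt} (hab : s(a, b) ∈ G)
    (hmin : ∀ p q, s(p, q) ∈ G → (posSide P p q).Nonempty →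
      (posSide P a b).ncard ≤ (posSide P p q).ncard)
    (hc : c ∈ posSide P a b) (hcd : s(c, d) ∈ G) : LineSupports P c d := by
  have ha : a ∈ P := (hG _ hab).2 a (Sym2.mem_mk_left a b)
  have hb : b ∈ P := (hG _ hab).2 b (Sym2.mem_mk_right a b)
  have hd : d ∈ P := (hG _ hcd).2 d (Sym2.mem_mk_right c d)
  have hcd' : c ≠ d := fun h ↦ (hG _ hcd).1 (Sym2.mk_isDiag_iff.2 h)
  have hca : c ≠ a := by rintro rfl; simpa using hc.2
  have hcb : c ≠ b := by rintro rfl; simpa using hc.2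
  have had : 0 ≤ orient a b d := by
    by_contra! had
    refine hnc hab hcd ?_ ⟨a, b, c, d, rfl, rfl, hconv.segCross_of_orient ha hb hc.1 hd hc.2 had⟩
    rw [Ne, Sym2.eq_iff]
    tauto
  obtain ⟨z, hz, hz0, hzc, hzd⟩ : ∃ z ∈ P, orient a b z = 0 ∧ z ≠ c ∧ z ≠ d := by
    by_cases hda : a = d
    · exact ⟨b, hb, by simp, hcb.symm, fun h ↦ by simp [posSide, h, ← hda] at hc⟩
    · exact ⟨a, ha, by simp, hca.symm, hda⟩
  refine hconv.lineSupports_of_forall_mul_nonneg hc.1 hd hz hcd' hzc hzd fun x hx ↦ ?_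
  have hz_ne := hconv.orient_ne_zero hc.1 hd hz hcd' hzc.symm hzd.symm
  obtain ⟨p, q, hpq, hF⟩ := exists_posSide_eq (P := P) c d (neg_ne_zero.2 hz_ne)
  have hF_sub : posSide P p q ⊂ posSide P a b := by
    refine ⟨hF ▸ fun y ⟨hy, hsep⟩ ↦
      ⟨hy, hconv.orient_pos_of_separated hc.1 hd hy hz hc.2 had hz0.le (by linarith)⟩, ?_⟩
    intro h
    simpa [hF] using h hc
  have hF_empty : posSide P p q = ∅ := by
    by_contra hne
    exact (hmin p q (hpq ▸ hcd) (Set.nonempty_iff_ne_empty.2 hne)).not_gt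
      (Set.ncard_lt_ncard hF_sub (hfin.subset (Set.sep_subset _ _)))
  have hx' : x ∉ posSide P p q := hF_empty ▸ Set.notMem_empty x
  rw [hF] at hx'
  simp only [Set.mem_sep_iff, not_and, not_lt] at hx'
  linarith [hx' hx]

theorem eq_empty_of_noncrossing_of_three_neighbours (hfin : P.Finite) (hconv : ConvexPosition P)
    (hG : ∀ e ∈ G, ¬ e.IsDiag ∧ ∀ x ∈ e, x ∈ P)
    (hnc : G.Pairwise fun e f ↦ ¬ EdgesCross e f)
    (hdeg : ∀ x ∈ P, ∃ y₁ y₂ y₃, y₁ ≠ y₂ ∧ y₁ ≠ y₃ ∧ y₂ ≠ y₃ ∧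
      s(x, y₁) ∈ G ∧ s(x, y₂) ∈ G ∧ s(x, y₃) ∈ G) :
    P = ∅ := by
  have nbr : ∀ {x y}, s(x, y) ∈ G → y ∈ P \ {x} := fun h ↦
    ⟨(hG _ h).2 _ (Sym2.mem_mk_right _ _), fun hy ↦ (hG _ h).1 (Sym2.mk_isDiag_iff.2 hy.symm)⟩
  set W := {e : Pt × Pt | s(e.1, e.2) ∈ G ∧ (posSide P e.1 e.2).Nonempty}
  by_contra hP
  obtain ⟨x, hx⟩ := Set.nonempty_iff_ne_empty.2 hP
  have hW : W.Nonempty := by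
    obtain ⟨y₁, y₂, -, h₁₂, -, -, h₁, h₂, -⟩ := hdeg x hx
    have h₀ := hconv.orient_ne_zero hx (nbr h₁).1 (nbr h₂).1 (Ne.symm (nbr h₁).2)
      (Ne.symm (nbr h₂).2) h₁₂
    obtain ⟨p, q, hpq, hside⟩ := exists_posSide_eq (P := P) x y₁ h₀
    exact ⟨(p, q), hpq ▸ h₁, y₂, hside ▸ ⟨(nbr h₂).1, mul_self_pos.2 h₀⟩⟩
  obtain ⟨⟨a, b⟩, ⟨hab, c, hc⟩, hmin⟩ : ∃ e ∈ W, ∀ e' ∈ W,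
      (posSide P e.1 e.2).ncard ≤ (posSide P e'.1 e'.2).ncard :=
    let f := fun e : Pt × Pt ↦ (posSide P e.1 e.2).ncard
    ⟨_, Function.argminOn_mem f W hW, fun _ he ↦ not_lt.1 (Function.not_lt_argminOn f W he)⟩
  obtain ⟨y₁, y₂, y₃, h₁₂, h₁₃, h₂₃, h₁, h₂, h₃⟩ := hdeg c hc.1
  have supp := fun {y} (h : s(c, y) ∈ G) ↦
    lineSupports_of_mem_posSide_of_minimal hfin hconv hG hnc hab
      (fun p q h hne ↦ hmin (p, q) ⟨h, hne⟩) hc h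
  exact not_lineSupports_three (nbr h₁) (nbr h₂) (nbr h₃) h₁₂ h₁₃ h₂₃ (supp h₁) (supp h₂) (supp h₃)

end NoncrossingGraph

lemma IsPerfMatch.exists_mem {M : Set (Sym2 Pt)} (hM : IsPerfMatch P M) {x : Pt} (hx : x ∈ P) :
    ∃ y, s(x, y) ∈ M := by
  obtain ⟨e, ⟨he, hxe⟩, -⟩ := hM.2 x hx
  obtain ⟨y, rfl⟩ := Sym2.mem_iff_exists.1 hxe
  exact ⟨y, he⟩

end

theorem convex_mutually_noncrossing_le_two_general (n k : ℕ) (h4 : 4 ≤ n)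
    (P : Set Pt) (hfin : P.Finite) (hcard : P.ncard = n) (hconv : ConvexPosition P)
    (M : Fin k → Set (Sym2 Pt))
    (hpm : ∀ i, IsPlaneMatch P (M i))
    (hdisj : ∀ i j, i ≠ j → Disjoint (M i) (M j))
    (hnc : ∀ i j, i ≠ j → ∀ e ∈ M i, ∀ f ∈ M j, ¬ EdgesCross e f) :
    k ≤ 2 := by
  by_contra! hk
  have hP : P ≠ ∅ := by rintro rfl; simp at hcard; omega
  refine hP (eq_empty_of_noncrossing_of_three_neighbours (G := ⋃ i, M i) hfin hconv ?_ ?_ ?_)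
  · simp only [Set.mem_iUnion]
    rintro e ⟨i, he⟩
    exact (hpm i).1.1 e he
  · simp only [Set.Pairwise, Set.mem_iUnion]
    rintro e ⟨i, he⟩ f ⟨j, hf⟩ hef
    rcases eq_or_ne i j with rfl | hij
    exacts [(hpm i).2 he hf hef, hnc i j hij e he f hf]
  · intro x hx
    choose y hy using fun i ↦ (hpm i).1.exists_mem hx
    have hy_ne : ∀ i j, i ≠ j → y i ≠ y j := fun i j hij h ↦
      Set.disjoint_left.1 (hdisj i j hij) (hy i) (h ▸ hy j)
    exact ⟨y ⟨0, by omega⟩, y ⟨1, by omega⟩, y ⟨2, by omega⟩, hy_ne _ _ (by simp),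
      hy_ne _ _ (by simp), hy_ne _ _ (by simp), Set.mem_iUnion_of_mem _ (hy _),
      Set.mem_iUnion_of_mem _ (hy _), Set.mem_iUnion_of_mem _ (hy _)⟩

/-- For `n ≥ 4` points in convex position (`n` even), any family of pairwise
edge-disjoint plane perfect matchings on `P` that are additionally pairwise non-crossing
has size at most 2. -/
theorem convex_mutually_noncrossing_le_two (n k : ℕ) (hn : Even n) (h4 : 4 ≤ n)
    (P : Set Pt) (hfin : P.Finite) (hcard : P.ncard = n) (hconv : ConvexPosition P)
    (M : Fin k → Set (Sym2 Pt))
    (hpm : ∀ i, IsPlaneMatch P (M i))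
    (hdisj : ∀ i j, i ≠ j → Disjoint (M i) (M j))
    (hnc : ∀ i j, i ≠ j → ∀ e ∈ M i, ∀ f ∈ M j, ¬ EdgesCross e f) :
    k ≤ 2 :=
  convex_mutually_noncrossing_le_two_general n k h4 P hfin hcard hconv M hpm hdisj hnc
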